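/- Under the assumptions on ω, for every ρ ∈ L¹(]a,b[) and all x ∈ [a,b], the second derivative of x ↦ (𝒥ρ)(x) satisfies |∂²_{xx} (𝒥ρ)(x)| ≤ 𝒲 ‖ρ‖_{L¹(]a,b[)}, where 𝒲 = 2‖ω″‖_{L∞}/K_ω + ‖ω‖_{L∞}‖ω″‖_{L¹}/K_ω² + 2‖ω‖_{L∞}‖ω′‖²_{L¹}/K_ω³ + 2‖ω′‖_{L∞}‖ω′‖_{L¹}/K_ω². -/

import Mathlib

/-!
Differentiating under the integral sign moves every `x`-derivative onto `ω`: the numerator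
`N x = ∫ ρ y * ω (y - x)` has `k`-th derivative bounded by `‖ω⁽ᵏ⁾‖_∞ ‖ρ‖_{L¹}`, and `W` has
`k`-th derivative bounded by `‖ω⁽ᵏ⁾‖_{L¹}`. Applying the quotient rule twice writes `(N / W)''`
as four terms, each of which is then controlled using `W ≥ Kω`.
-/

open MeasureTheory Real

theorem hasDerivAt_intervalIntegral_mul_comp_sub {a b M : ℝ} {ρ g : ℝ → ℝ}
    (hρ : IntervalIntegrable ρ volume a b) (hg : Differentiable ℝ g)
    (hg' : ∀ y, |deriv g y| ≤ M) (x : ℝ) :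
    HasDerivAt (fun x => ∫ y in a..b, ρ y * g (y - x))
      (-∫ y in a..b, ρ y * deriv g (y - x)) x := by
  have hρm : AEStronglyMeasurable ρ (volume.restrict (Set.uIoc a b)) :=
    hρ.def'.aestronglyMeasurable
  have hderiv : ∀ y z, HasDerivAt (fun x => ρ y * g (y - x)) (ρ y * -deriv g (y - z)) z := by
    intro y z
    simpa using ((hg (y - z)).hasDerivAt.comp z ((hasDerivAt_id z).const_sub y)).const_mul (ρ y)
  have h := intervalIntegral.hasDerivAt_integral_of_dominated_loc_of_deriv_le
    (μ := volume) (x₀ := x) (F := fun x y => ρ y * g (y - x))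
    (F' := fun x y => ρ y * -deriv g (y - x))
    (bound := fun y => M * |ρ y|) Filter.univ_mem
    (Filter.Eventually.of_forall fun _ =>
      hρm.mul (hg.continuous.comp (continuous_id.sub continuous_const)).aestronglyMeasurable)
    (hρ.mul_continuousOn (hg.continuous.comp (continuous_id.sub continuous_const)).continuousOn)
    (hρm.mul ((measurable_deriv g).comp (measurable_id.sub_const x)).neg.aestronglyMeasurable)
    (Filter.Eventually.of_forall fun y _ z _ => by
      rw [norm_mul, norm_neg, Real.norm_eq_abs, Real.norm_eq_abs, mul_comm]
      exact mul_le_mul_of_nonneg_right (hg' _) (abs_nonneg _))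
    (hρ.abs.const_mul M)
    (Filter.Eventually.of_forall fun y _ z _ => hderiv y z)
  simpa only [mul_neg, intervalIntegral.integral_neg] using h.2

theorem hasDerivAt_intervalIntegral_comp_sub {a b M : ℝ} {g : ℝ → ℝ} (hg : Differentiable ℝ g)
    (hg' : ∀ y, |deriv g y| ≤ M) (x : ℝ) :
    HasDerivAt (fun x => ∫ y in a..b, g (y - x)) (-∫ y in a..b, deriv g (y - x)) x := by
  simpa only [one_mul] using
    hasDerivAt_intervalIntegral_mul_comp_sub (ρ := fun _ => 1) intervalIntegrable_const hg hg' x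

theorem abs_intervalIntegral_mul_comp_sub_le {a b M : ℝ} {ρ g : ℝ → ℝ} (hab : a ≤ b)
    (hρ : IntervalIntegrable ρ volume a b) (hg : ∀ y, |g y| ≤ M) (x : ℝ) :
    |∫ y in a..b, ρ y * g (y - x)| ≤ M * ∫ y in a..b, |ρ y| := by
  rw [← intervalIntegral.integral_const_mul M fun y => |ρ y|, ← Real.norm_eq_abs]
  refine intervalIntegral.norm_integral_le_of_norm_le hab
    (Filter.Eventually.of_forall fun y _ => ?_) (hρ.abs.const_mul M)
  rw [Real.norm_eq_abs, abs_mul, mul_comm]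
  exact mul_le_mul_of_nonneg_right (hg _) (abs_nonneg _)

theorem abs_intervalIntegral_comp_sub_le_integral_abs {g : ℝ → ℝ} (hg : Integrable g)
    (a b x : ℝ) : |∫ y in a..b, g (y - x)| ≤ ∫ y, |g y| :=
  calc |∫ y in a..b, g (y - x)| ≤ ∫ y in Set.uIoc a b, |g (y - x)| := by
        simpa only [Real.norm_eq_abs] using
          intervalIntegral.norm_integral_le_integral_norm_uIoc (f := fun y => g (y - x))
    _ ≤ ∫ y, |g (y - x)| :=
        setIntegral_le_integral (hg.comp_sub_right x).abs (.of_forall fun _ => abs_nonneg _)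
    _ = ∫ y, |g y| := integral_sub_right_eq_self (fun y => |g y|) x

theorem hasDerivAt_deriv_div {u v u' v' : ℝ → ℝ} {u'' v'' x : ℝ}
    (hu : ∀ z, HasDerivAt u (u' z) z) (hv : ∀ z, HasDerivAt v (v' z) z)
    (hu' : HasDerivAt u' u'' x) (hv' : HasDerivAt v' v'' x) (hx : v x ≠ 0) :
    HasDerivAt (deriv fun z => u z / v z)
      (u'' / v x - 2 * u' x * v' x / v x ^ 2 - u x * v'' / v x ^ 2
        + 2 * u x * v' x ^ 2 / v x ^ 3) x := by
  have hv_cont : Continuous v := continuous_iff_continuousAt.2 fun z => (hv z).continuousAt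
  have h_first : deriv (fun z => u z / v z) =ᶠ[nhds x]
      fun z => (u' z * v z - u z * v' z) / v z ^ 2 := by
    filter_upwards [hv_cont.continuousAt.eventually_ne hx] with z hz
    exact ((hu z).div (hv z) hz).deriv
  have h := ((hu'.mul (hv x)).sub ((hu x).mul hv')).div ((hv x).pow 2) (pow_ne_zero 2 hx)
  refine (h.congr_of_eventuallyEq h_first).congr_deriv ?_
  simp only [Pi.sub_apply, Pi.mul_apply, Pi.pow_apply]
  field_simp
  ring

theorem abs_second_deriv_div_formula_le {u u' u'' v v' v'' A₀ A₁ A₂ B₁ B₂ K : ℝ}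
    (hK : 0 < K) (hv : K ≤ v) (hu : |u| ≤ A₀) (hu' : |u'| ≤ A₁) (hu'' : |u''| ≤ A₂)
    (hv' : |v'| ≤ B₁) (hv'' : |v''| ≤ B₂) :
    |u'' / v - 2 * u' * v' / v ^ 2 - u * v'' / v ^ 2 + 2 * u * v' ^ 2 / v ^ 3|
      ≤ A₂ / K + 2 * A₁ * B₁ / K ^ 2 + A₀ * B₂ / K ^ 2 + 2 * A₀ * B₁ ^ 2 / K ^ 3 := by
  have hpow : ∀ n : ℕ, 0 < K ^ n ∧ K ^ n ≤ |v ^ n| := fun n =>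
    ⟨pow_pos hK n, by rw [abs_pow, abs_of_pos (hK.trans_le hv)]; exact pow_le_pow_left₀ hK.le hv n⟩
  have hdiv : ∀ {p P : ℝ} (n : ℕ), |p| ≤ P → |p / v ^ n| ≤ P / K ^ n := fun n hp => by
    rw [abs_div]
    exact div_le_div₀ ((abs_nonneg _).trans hp) hp (hpow n).1 (hpow n).2
  have hmul : ∀ {p q P Q : ℝ}, |p| ≤ P → |q| ≤ Q → |p * q| ≤ P * Q := fun hp hq => by
    rw [abs_mul]; exact mul_le_mul hp hq (abs_nonneg _) ((abs_nonneg _).trans hp)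
  have h2 : |(2 : ℝ)| ≤ 2 := by norm_num
  have t₁ : |u'' / v| ≤ A₂ / K := by simpa using hdiv 1 hu''
  have t₂ : |2 * u' * v' / v ^ 2| ≤ 2 * A₁ * B₁ / K ^ 2 := hdiv 2 (hmul (hmul h2 hu') hv')
  have t₃ : |u * v'' / v ^ 2| ≤ A₀ * B₂ / K ^ 2 := hdiv 2 (hmul hu hv'')
  have t₄ : |2 * u * v' ^ 2 / v ^ 3| ≤ 2 * A₀ * B₁ ^ 2 / K ^ 3 :=
    hdiv 3 (hmul (hmul h2 hu) (by rw [abs_pow]; exact pow_le_pow_left₀ (abs_nonneg _) hv' 2))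
  have := abs_add_le (u'' / v - 2 * u' * v' / v ^ 2 - u * v'' / v ^ 2) (2 * u * v' ^ 2 / v ^ 3)
  have := abs_sub (u'' / v - 2 * u' * v' / v ^ 2) (u * v'' / v ^ 2)
  have := abs_sub (u'' / v) (2 * u' * v' / v ^ 2)
  linarith

theorem stmt2_general
    (a b Kω Mω Mω' Mω'' : ℝ) (hab : a < b) (hKω : 0 < Kω)
    (ω : ℝ → ℝ) (hω : ContDiff ℝ 2 ω)
    (hω'int : Integrable (deriv ω))
    (hω''int : Integrable (deriv (deriv ω)))
    (hωbd : ∀ y, |ω y| ≤ Mω)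
    (hω'bd : ∀ y, |deriv ω y| ≤ Mω')
    (hω''bd : ∀ y, |deriv (deriv ω) y| ≤ Mω'')
    (W : ℝ → ℝ) (hW : ∀ x, W x = ∫ y in a..b, ω (y - x))
    (hWlb : ∀ x ∈ Set.Icc a b, Kω ≤ W x)
    (ρ : ℝ → ℝ) (hρ : IntervalIntegrable ρ volume a b)
    (J : ℝ → ℝ) (hJ : ∀ x, J x = (∫ y in a..b, ρ y * ω (y - x)) / W x) :
    ∀ x ∈ Set.Icc a b,
      |deriv (deriv J) x| ≤
        (2 * Mω'' / Kω + Mω * (∫ y, |deriv (deriv ω) y|) / Kω ^ 2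
          + 2 * Mω * (∫ y, |deriv ω y|) ^ 2 / Kω ^ 3
          + 2 * Mω' * (∫ y, |deriv ω y|) / Kω ^ 2) * ∫ y in a..b, |ρ y| := by
  intro x hx
  have hωd : Differentiable ℝ ω := hω.differentiable (by norm_num)
  have hω'd : Differentiable ℝ (deriv ω) := hω.differentiable_deriv_two
  have hW' : ∀ z, HasDerivAt W (-∫ y in a..b, deriv ω (y - z)) z := by
    rw [funext hW]; exact hasDerivAt_intervalIntegral_comp_sub hωd hω'bd
  obtain rfl : J = fun x => (∫ y in a..b, ρ y * ω (y - x)) / W x := funext hJ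
  have hJ'' := hasDerivAt_deriv_div
    (hasDerivAt_intervalIntegral_mul_comp_sub hρ hωd hω'bd) hW'
    (hasDerivAt_intervalIntegral_mul_comp_sub hρ hω'd hω''bd x).neg
    (hasDerivAt_intervalIntegral_comp_sub hω'd hω''bd x).neg
    (hKω.trans_le (hWlb x hx)).ne'
  have hN₀ := abs_intervalIntegral_mul_comp_sub_le hab.le hρ hωbd x
  have hN₁ := abs_intervalIntegral_mul_comp_sub_le hab.le hρ hω'bd x
  have hN₂ := abs_intervalIntegral_mul_comp_sub_le hab.le hρ hω''bd x
  have hW₁ := abs_intervalIntegral_comp_sub_le_integral_abs hω'int a b x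
  have hW₂ := abs_intervalIntegral_comp_sub_le_integral_abs hω''int a b x
  have hR : 0 ≤ Mω'' * (∫ y in a..b, |ρ y|) / Kω :=
    div_nonneg (mul_nonneg ((abs_nonneg _).trans (hω''bd 0))
      (intervalIntegral.integral_nonneg hab.le fun _ _ => abs_nonneg _)) hKω.le
  rw [← abs_neg] at hN₁ hW₁
  have := abs_second_deriv_div_formula_le hKω (hWlb x hx) hN₀ hN₁ hN₂ hW₁ hW₂
  rw [hJ''.deriv]
  simp only [neg_neg]
  linear_combination this + hR

theorem stmt2
    (a b Kω Mω Mω' Mω'' : ℝ) (hab : a < b) (hKω : 0 < Kω)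
    (ω : ℝ → ℝ) (hω : ContDiff ℝ 2 ω)
    (hωint : Integrable ω) (hω'int : Integrable (deriv ω))
    (hω''int : Integrable (deriv (deriv ω)))
    (hωbd : ∀ y, |ω y| ≤ Mω)
    (hω'bd : ∀ y, |deriv ω y| ≤ Mω')
    (hω''bd : ∀ y, |deriv (deriv ω) y| ≤ Mω'')
    (W : ℝ → ℝ) (hW : ∀ x, W x = ∫ y in a..b, ω (y - x))
    (hWlb : ∀ x ∈ Set.Icc a b, Kω ≤ W x)
    (ρ : ℝ → ℝ) (hρ : IntervalIntegrable ρ volume a b)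
    (J : ℝ → ℝ) (hJ : ∀ x, J x = (∫ y in a..b, ρ y * ω (y - x)) / W x) :
    ∀ x ∈ Set.Icc a b,
      |deriv (deriv J) x| ≤
        (2 * Mω'' / Kω + Mω * (∫ y, |deriv (deriv ω) y|) / Kω ^ 2
          + 2 * Mω * (∫ y, |deriv ω y|) ^ 2 / Kω ^ 3
          + 2 * Mω' * (∫ y, |deriv ω y|) / Kω ^ 2) * ∫ y in a..b, |ρ y| :=
  stmt2_general a b Kω Mω Mω' Mω'' hab hKω ω hω hω'int hω''int hωbd hω'bd hω''bd W hW hWlb ρ hρ J hJ
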